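/- Let X, Y_1, Z_1, W_1 be finite random variables with Z_1 = Q_1(X) a deterministic function of X, W_1 ↔ X ↔ Y_1 a Markov chain, and Z_1 a deterministic function of (W_1, Y_1). Then I(X; W_1 | Y_1) ≥ H(Z_1 | Y_1). -/

import Mathlib

open scoped BigOperators

namespace SIScalable

variable {Ω : Type*} [Fintype Ω]

/-- Probability that a finite random variable `X` takes value `a`, under pmf `μ`. -/
noncomputable def pr (μ : Ω → ℝ) {A : Type*} [DecidableEq A] (X : Ω → A) (a : A) : ℝ :=
  ∑ ω, if X ω = a then μ ω else 0

/-- `μ` is a probability mass function. -/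
def IsPMF (μ : Ω → ℝ) : Prop := (∀ ω, 0 ≤ μ ω) ∧ ∑ ω, μ ω = 1

/-- Shannon entropy (in bits) of a finite random variable. -/
noncomputable def ent (μ : Ω → ℝ) {A : Type*} [Fintype A] [DecidableEq A] (X : Ω → A) : ℝ :=
  -∑ a : A, pr μ X a * Real.logb 2 (pr μ X a)

/-- Conditional Shannon entropy `H(X|Y)`. -/
noncomputable def condEnt (μ : Ω → ℝ) {A B : Type*} [Fintype A] [DecidableEq A]
    [Fintype B] [DecidableEq B] (X : Ω → A) (Y : Ω → B) : ℝ :=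
  ent μ (fun ω => (X ω, Y ω)) - ent μ Y

/-- Conditional mutual information `I(X;Y|Z)`. -/
noncomputable def cmi (μ : Ω → ℝ) {A B C : Type*} [Fintype A] [DecidableEq A]
    [Fintype B] [DecidableEq B] [Fintype C] [DecidableEq C]
    (X : Ω → A) (Y : Ω → B) (Z : Ω → C) : ℝ :=
  ent μ (fun ω => (X ω, Z ω)) + ent μ (fun ω => (Y ω, Z ω))
    - ent μ (fun ω => (X ω, Y ω, Z ω)) - ent μ Z

/-!
Since `Z₁ = Q₁(X)` is a function of `X`, and almost surely also of `(W₁, Y₁)`, adjoining `Z₁` to `Y₁`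
leaves `H(X,Y₁)`, `H(W₁,Y₁)` and `H(X,W₁,Y₁)` unchanged. Hence
`I(X;W₁|Y₁) = I(X;W₁|Z₁,Y₁) + H(Z₁|Y₁) ≥ H(Z₁|Y₁)`, by nonnegativity of conditional mutual
information, i.e. submodularity of entropy, which is Gibbs' inequality.
-/

open Finset Real

lemma mul_logb_le_mul_logb_add {b p s : ℝ} (hb : 1 < b) (hp : 0 ≤ p) (hs : 0 ≤ s)
    (hps : 0 < p → 0 < s) :
    p * logb b s ≤ p * logb b p + (s - p) / log b := by
  have hlogb : 0 < log b := log_pos hb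
  rcases hp.eq_or_lt with rfl | hp
  · simpa using div_nonneg hs hlogb.le
  have hs := hps hp
  have key : p * log (s / p) ≤ s - p :=
    calc p * log (s / p) ≤ p * (s / p - 1) :=
          mul_le_mul_of_nonneg_left (log_le_sub_one_of_pos (div_pos hs hp)) hp.le
      _ = s - p := by field_simp
  have hdiff : p * logb b s - p * logb b p = p * log (s / p) / log b := by
    rw [log_div hs.ne' hp.ne']; simp only [logb]; ring
  linarith [div_le_div_of_nonneg_right key hlogb.le]

theorem sum_mul_logb_le_sum_mul_logb {ι : Type*} [Fintype ι] {b : ℝ} (hb : 1 < b)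
    (p q : ι → ℝ) (hp : ∀ i, 0 ≤ p i) (hq : ∀ i, 0 ≤ q i) (hpq : ∀ i, 0 < p i → 0 < q i)
    (hsum : ∑ i, q i ≤ ∑ i, p i) :
    ∑ i, p i * logb b (q i) ≤ ∑ i, p i * logb b (p i) := by
  have hrest : (∑ i, q i - ∑ i, p i) / log b ≤ 0 :=
    div_nonpos_of_nonpos_of_nonneg (by linarith) (log_pos hb).le
  calc ∑ i, p i * logb b (q i)
      ≤ ∑ i, (p i * logb b (p i) + (q i - p i) / log b) :=
        sum_le_sum fun i _ => mul_logb_le_mul_logb_add hb (hp i) (hq i) (hpq i)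
    _ = ∑ i, p i * logb b (p i) + (∑ i, q i - ∑ i, p i) / log b := by
        rw [sum_add_distrib, ← sum_div, sum_sub_distrib]
    _ ≤ ∑ i, p i * logb b (p i) := by linarith

section Distribution

variable (μ : Ω → ℝ) {A B : Type*} [DecidableEq A] [DecidableEq B]

lemma pr_nonneg (h0 : ∀ ω, 0 ≤ μ ω) (V : Ω → A) (a : A) : 0 ≤ pr μ V a :=
  sum_nonneg fun ω _ => by split_ifs <;> simp [h0 ω]

lemma pr_le_pr_comp (h0 : ∀ ω, 0 ≤ μ ω) (V : Ω → A) (f : A → B) (a : A) :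
    pr μ V a ≤ pr μ (fun ω => f (V ω)) (f a) :=
  sum_le_sum fun ω _ => by
    by_cases h : V ω = a
    · simp [h]
    · rw [if_neg h]; split_ifs <;> simp [h0 ω]

lemma pr_comp_of_injective (V : Ω → A) {f : A → B} (hf : Function.Injective f) (a : A) :
    pr μ (fun ω => f (V ω)) (f a) = pr μ V a := by
  simp only [pr, hf.eq_iff]

lemma pr_congr (h0 : ∀ ω, 0 ≤ μ ω) {U V : Ω → A} (h : ∀ ω, 0 < μ ω → U ω = V ω) :
    pr μ U = pr μ V := by
  funext a
  refine sum_congr rfl fun ω _ => ?_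
  rcases (h0 ω).eq_or_lt with hω | hω
  · simp [← hω]
  · rw [h ω hω]

lemma sum_pr_mul [Fintype A] (V : Ω → A) (φ : A → ℝ) :
    ∑ a, pr μ V a * φ a = ∑ ω, μ ω * φ (V ω) := by
  simp only [pr, sum_mul, ite_mul, zero_mul]
  rw [sum_comm]
  simp

lemma sum_pr_mul_comp [Fintype A] [Fintype B] (V : Ω → A) (f : A → B) (φ : B → ℝ) :
    ∑ a, pr μ V a * φ (f a) = ∑ b, pr μ (fun ω => f (V ω)) b * φ b := by
  rw [sum_pr_mul, sum_pr_mul]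

lemma sum_pr_eq_one [Fintype A] (hμ : IsPMF μ) (V : Ω → A) : ∑ a, pr μ V a = 1 := by
  simpa [hμ.2] using sum_pr_mul μ V 1

lemma sum_pr_pair [Fintype A] (U : Ω → A) (V : Ω → B) (b : B) :
    ∑ a, pr μ (fun ω => (U ω, V ω)) (a, b) = pr μ V b := by
  simp only [pr, Prod.mk.injEq]
  rw [sum_comm]
  simp [ite_and]

end Distribution

section Entropy

variable (μ : Ω → ℝ) {A B C : Type*} [Fintype A] [DecidableEq A] [Fintype B] [DecidableEq B]
  [Fintype C] [DecidableEq C]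

lemma sum_pr_mul_logb_pr_comp (V : Ω → A) (f : A → B) :
    ∑ a, pr μ V a * logb 2 (pr μ (fun ω => f (V ω)) (f a)) = -ent μ (fun ω => f (V ω)) := by
  rw [ent, neg_neg]
  exact sum_pr_mul_comp μ V f fun b => logb 2 (pr μ (fun ω => f (V ω)) b)

lemma ent_comp_of_injective (V : Ω → A) {f : A → B} (hf : Function.Injective f) :
    ent μ (fun ω => f (V ω)) = ent μ V := by
  rw [← neg_neg (ent μ (fun ω => f (V ω))), ← sum_pr_mul_logb_pr_comp]
  simp only [pr_comp_of_injective μ V hf, ent]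

lemma ent_congr (h0 : ∀ ω, 0 ≤ μ ω) {U V : Ω → A} (h : ∀ ω, 0 < μ ω → U ω = V ω) :
    ent μ U = ent μ V := by
  rw [ent, ent, pr_congr μ h0 h]

/-- Gibbs' inequality for the law of `(X,Y,Z)` against `p(x,z) p(y,z) / p(z)`, a probability vector
since `∑ₓ p(x,z) = ∑_y p(y,z) = p(z)`. -/
theorem ent_triple_add_ent_le (hμ : IsPMF μ) (X : Ω → A) (Y : Ω → B) (Z : Ω → C) :
    ent μ (fun ω => (X ω, Y ω, Z ω)) + ent μ Z
      ≤ ent μ (fun ω => (X ω, Z ω)) + ent μ (fun ω => (Y ω, Z ω)) := by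
  set V := fun ω => (X ω, Y ω, Z ω)
  set pXZ := pr μ (fun ω => (X ω, Z ω))
  set pYZ := pr μ (fun ω => (Y ω, Z ω))
  set pZ := pr μ Z
  set q : A × B × C → ℝ := fun v => pXZ (v.1, v.2.2) * pYZ (v.2.1, v.2.2) / pZ v.2.2
  have hpos : ∀ v, 0 < pr μ V v → 0 < pXZ (v.1, v.2.2) ∧ 0 < pYZ (v.2.1, v.2.2) ∧ 0 < pZ v.2.2 :=
    fun v hv => ⟨hv.trans_le (pr_le_pr_comp μ hμ.1 V (fun v => (v.1, v.2.2)) v),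
      hv.trans_le (pr_le_pr_comp μ hμ.1 V (fun v => (v.2.1, v.2.2)) v),
      hv.trans_le (pr_le_pr_comp μ hμ.1 V (fun v => v.2.2) v)⟩
  have hq_sum : ∑ v, q v = 1 := by
    calc ∑ v, q v = ∑ c, (∑ a, pXZ (a, c)) * (∑ b, pYZ (b, c)) / pZ c := by
          simp only [q, Fintype.sum_prod_type, sum_mul_sum, sum_div]
          exact (sum_congr rfl fun a _ => sum_comm).trans sum_comm
      _ = ∑ c, pZ c := by simp only [pXZ, pYZ, pZ, sum_pr_pair, mul_self_div_self]
      _ = 1 := sum_pr_eq_one μ hμ Z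
  have hlog : ∑ v, pr μ V v * logb 2 (q v)
      = ∑ v, pr μ V v * logb 2 (pXZ (v.1, v.2.2)) + ∑ v, pr μ V v * logb 2 (pYZ (v.2.1, v.2.2))
        - ∑ v, pr μ V v * logb 2 (pZ v.2.2) := by
    rw [← sum_add_distrib, ← sum_sub_distrib]
    refine sum_congr rfl fun v _ => ?_
    rcases (pr_nonneg μ hμ.1 V v).eq_or_lt with hv | hv
    · simp [← hv]
    obtain ⟨h1, h2, h3⟩ := hpos v hv
    rw [logb_div (mul_pos h1 h2).ne' h3.ne', logb_mul h1.ne' h2.ne']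
    ring
  have hgibbs := sum_mul_logb_le_sum_mul_logb one_lt_two (pr μ V) q (pr_nonneg μ hμ.1 V)
    (fun v => div_nonneg (mul_nonneg (pr_nonneg μ hμ.1 _ _) (pr_nonneg μ hμ.1 _ _))
      (pr_nonneg μ hμ.1 _ _))
    (fun v hv => by obtain ⟨h1, h2, h3⟩ := hpos v hv; positivity)
    (by rw [hq_sum, sum_pr_eq_one μ hμ])
  rw [hlog, sum_pr_mul_logb_pr_comp μ V (fun v => (v.1, v.2.2)),
    sum_pr_mul_logb_pr_comp μ V (fun v => (v.2.1, v.2.2)),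
    sum_pr_mul_logb_pr_comp μ V (fun v => v.2.2)] at hgibbs
  have hV : ent μ V = -∑ v, pr μ V v * logb 2 (pr μ V v) := rfl
  linarith

end Entropy

theorem first_stage_rate_lower_bound_general
    {Ω 𝒳 𝒴₁ 𝒲₁ 𝒵₁ : Type*} [Fintype Ω]
    [Fintype 𝒳] [DecidableEq 𝒳] [Fintype 𝒴₁] [DecidableEq 𝒴₁]
    [Fintype 𝒲₁] [DecidableEq 𝒲₁] [Fintype 𝒵₁] [DecidableEq 𝒵₁]
    (μ : Ω → ℝ) (hμ : IsPMF μ)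
    (X : Ω → 𝒳) (Y₁ : Ω → 𝒴₁) (W₁ : Ω → 𝒲₁) (Q₁ : 𝒳 → 𝒵₁)
    (g : 𝒲₁ × 𝒴₁ → 𝒵₁)
    (hg : ∀ ω, 0 < μ ω → Q₁ (X ω) = g (W₁ ω, Y₁ ω)) :
    condEnt μ (fun ω => Q₁ (X ω)) Y₁ ≤ cmi μ X W₁ Y₁ := by
  have hsub := ent_triple_add_ent_le μ hμ X W₁ (fun ω => (Q₁ (X ω), Y₁ ω))
  have hXWY : ent μ (fun ω => (X ω, W₁ ω, (Q₁ (X ω), Y₁ ω)))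
      = ent μ (fun ω => (X ω, W₁ ω, Y₁ ω)) :=
    ent_comp_of_injective μ (fun ω => (X ω, W₁ ω, Y₁ ω))
      (f := fun v => (v.1, v.2.1, (Q₁ v.1, v.2.2))) fun v w h => by simp_all [Prod.ext_iff]
  have hXY : ent μ (fun ω => (X ω, (Q₁ (X ω), Y₁ ω))) = ent μ (fun ω => (X ω, Y₁ ω)) :=
    ent_comp_of_injective μ (fun ω => (X ω, Y₁ ω))
      (f := fun v => (v.1, (Q₁ v.1, v.2))) fun v w h => by simp_all [Prod.ext_iff]
  have hWY : ent μ (fun ω => (W₁ ω, (Q₁ (X ω), Y₁ ω))) = ent μ (fun ω => (W₁ ω, Y₁ ω)) :=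
    calc ent μ (fun ω => (W₁ ω, (Q₁ (X ω), Y₁ ω)))
        = ent μ (fun ω => (W₁ ω, (g (W₁ ω, Y₁ ω), Y₁ ω))) :=
          ent_congr μ hμ.1 fun ω hω => by rw [hg ω hω]
      _ = ent μ (fun ω => (W₁ ω, Y₁ ω)) :=
          ent_comp_of_injective μ (fun ω => (W₁ ω, Y₁ ω))
            (f := fun v => (v.1, (g v, v.2))) fun v w h => by simp_all [Prod.ext_iff]
  rw [condEnt, cmi]
  linarith

/-- With Z₁ = Q₁(X), W₁ ↔ X ↔ Y₁ Markov, and Z₁ = g(W₁,Y₁) a.s.,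
I(X;W₁|Y₁) ≥ H(Z₁|Y₁). -/
theorem first_stage_rate_lower_bound
    {Ω 𝒳 𝒴₁ 𝒲₁ 𝒵₁ : Type*} [Fintype Ω]
    [Fintype 𝒳] [DecidableEq 𝒳] [Fintype 𝒴₁] [DecidableEq 𝒴₁]
    [Fintype 𝒲₁] [DecidableEq 𝒲₁] [Fintype 𝒵₁] [DecidableEq 𝒵₁]
    (μ : Ω → ℝ) (hμ : IsPMF μ)
    (X : Ω → 𝒳) (Y₁ : Ω → 𝒴₁) (W₁ : Ω → 𝒲₁) (Q₁ : 𝒳 → 𝒵₁)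
    (hMarkov : ∀ (w₁ : 𝒲₁) (x : 𝒳) (y₁ : 𝒴₁),
      pr μ (fun ω => (W₁ ω, X ω, Y₁ ω)) (w₁, x, y₁) * pr μ X x
        = pr μ (fun ω => (W₁ ω, X ω)) (w₁, x)
          * pr μ (fun ω => (X ω, Y₁ ω)) (x, y₁))
    (g : 𝒲₁ × 𝒴₁ → 𝒵₁)
    (hg : ∀ ω, 0 < μ ω → Q₁ (X ω) = g (W₁ ω, Y₁ ω)) :
    condEnt μ (fun ω => Q₁ (X ω)) Y₁ ≤ cmi μ X W₁ Y₁ :=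
  first_stage_rate_lower_bound_general μ hμ X Y₁ W₁ Q₁ g hg

end SIScalable
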